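/- Let X be a one-sided subshift of finite type with a stationary Markov measure μ and alphabet containing 𝔞₁ with q = μ(x_n=𝔞₁|x_{n−1}=𝔞₁) > 0. Let [𝔞₁]_n denote the cylinder of n consecutive 𝔞₁'s and define χ((x_j)) = η^{min{j : x_j ≠ 𝔞₁}−1} for η > 1/q. Then for every ε ∈ (0,1) with ε ∈ [μ([𝔞₁]_n), μ([𝔞₁]_{n−1})) and every ℓ > 0: (1/ε)·∫ osc(χ·1_{χ≤ℓ}, B(ε,x)) dμ(x) ≤ ℓ, where B(ε,x) is the ball in the metric d₂(x,y) = inf{μ(C) : x,y ∈ C, C a cylinder}. -/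

import Mathlib

open MeasureTheory
open scoped ENNReal

/-- A sequence is admissible for the transition matrix `A`. -/
def Adm {𝔸 : Type*} (A : 𝔸 → 𝔸 → Bool) (x : ℕ → 𝔸) : Prop :=
  ∀ n, A (x n) (x (n + 1)) = true

/-- The cylinder set of the word `w 0 … w (n-1)` inside the subshift. -/
def cylinder {𝔸 : Type*} (A : 𝔸 → 𝔸 → Bool) (w : ℕ → 𝔸) (n : ℕ) :
    Set {x : ℕ → 𝔸 // Adm A x} :=
  {x | ∀ i < n, x.1 i = w i}

/-- `A` is irreducible and aperiodic (equivalently: primitive). -/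
def Primitive {𝔸 : Type*} (A : 𝔸 → 𝔸 → Bool) : Prop :=
  ∃ N : ℕ, 0 < N ∧ ∀ i j : 𝔸, ∃ w : ℕ → 𝔸, w 0 = i ∧ w N = j ∧
    ∀ k < N, A (w k) (w (k + 1)) = true


/-- The measure-metric `d₂(x,y) = inf{μ(C) : x, y ∈ C, C a cylinder}` (in `ℝ≥0∞`). -/
noncomputable def d2 {𝔸 : Type*} (A : 𝔸 → 𝔸 → Bool) [MeasurableSpace 𝔸]
    (μ : Measure {x : ℕ → 𝔸 // Adm A x}) (x y : {x : ℕ → 𝔸 // Adm A x}) : ℝ≥0∞ :=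
  ⨅ (n : ℕ) (_ : ∀ i < n, x.1 i = y.1 i), μ (cylinder A x.1 n)

/-- The ball of radius `ε` around `x` in the metric `d₂`. -/
def ball {𝔸 : Type*} (A : 𝔸 → 𝔸 → Bool) [MeasurableSpace 𝔸]
    (μ : Measure {x : ℕ → 𝔸 // Adm A x}) (ε : ℝ) (x : {x : ℕ → 𝔸 // Adm A x}) :
    Set {x : ℕ → 𝔸 // Adm A x} :=
  {y | d2 A μ x y < ENNReal.ofReal ε}

/-- Essential oscillation of `h` on the set `C`. -/
noncomputable def osc {α : Type*} [MeasurableSpace α] (μ : Measure α)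
    (h : α → ℝ) (C : Set α) : ℝ :=
  essSup h (μ.restrict C) - essInf h (μ.restrict C)

/-!
A point `x` outside `[𝔞₁]_n` leaves `𝔞₁` at a first time `j < n`. Since `ε < μ([𝔞₁]_{n-1})`,
the `d₂`-ball of radius `ε` about `x` lies in the cylinder of `x` of length `j + 1`, so `χ`,
which depends only on that exit time, is constant on the ball and the truncation has zero
oscillation there. On `[𝔞₁]_n` the truncation takes values in `[0, ℓ]` almost everywhere:
primitivity forces `q < 1`, so the constant sequence `𝔞₁𝔞₁𝔞₁…` is null. Integrating,
`∫ osc ≤ ℓ · μ([𝔞₁]_n) ≤ ℓ · ε`.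
-/

open Filter Topology

section Oscillation

variable {α : Type*} [MeasurableSpace α] {μ : Measure α} {h : α → ℝ} {C : Set α}

theorem osc_of_restrict_eq_zero (hC : μ.restrict C = 0) : osc μ h C = 0 := by
  simp [osc, essSup, essInf, hC, Filter.limsup_eq, Filter.liminf_eq]

theorem osc_le_of_ae_mem_Icc {a b : ℝ} (hab : a ≤ b)
    (hh : ∀ᵐ x ∂μ.restrict C, h x ∈ Set.Icc a b) : osc μ h C ≤ b - a := by
  rcases eq_or_ne (μ.restrict C) 0 with hC | hC
  · rw [osc_of_restrict_eq_zero hC]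
    linarith
  have : (ae (μ.restrict C)).NeBot := ae_neBot.2 hC
  have hle : ∀ᵐ x ∂μ.restrict C, h x ≤ b := hh.mono fun _ hx => hx.2
  have hge : ∀ᵐ x ∂μ.restrict C, a ≤ h x := hh.mono fun _ hx => hx.1
  have hsup : essSup h (μ.restrict C) ≤ b :=
    essSup_le_of_ae_le b hle (Filter.isCoboundedUnder_le_of_eventually_le _ hge)
  have hinf : a ≤ essInf h (μ.restrict C) :=
    le_essInf_of_ae_le a hge (Filter.isCoboundedUnder_ge_of_eventually_le _ hle)
  rw [osc]
  linarith

end Oscillation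

theorem Primitive.exists_ne_adj {𝔸 : Type*} [Nontrivial 𝔸] {A : 𝔸 → 𝔸 → Bool}
    (hA : Primitive A) (a : 𝔸) : ∃ b ≠ a, A a b = true := by
  by_contra! hstuck
  obtain ⟨b, hb⟩ := exists_ne a
  obtain ⟨N, -, hpath⟩ := hA
  obtain ⟨w, hw0, hwN, hadj⟩ := hpath a b
  have hconst : ∀ k ≤ N, w k = a := by
    intro k
    induction k with
    | zero => exact fun _ => hw0
    | succ k ih =>
      intro hk
      have hwk := ih (by omega)
      by_contra hne
      exact hstuck _ hne (hwk ▸ hadj k (by omega))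
  exact hb (hwN ▸ hconst N le_rfl)

theorem Primitive.self_transition_lt_one {𝔸 : Type*} [Fintype 𝔸] [Nontrivial 𝔸]
    {A : 𝔸 → 𝔸 → Bool} (hA : Primitive A) {P : 𝔸 → 𝔸 → ℝ} (hPnn : ∀ i j, 0 ≤ P i j)
    (hcompat : ∀ i j, P i j = 0 ↔ A i j = false) (hrow : ∀ i, ∑ j, P i j = 1) (a : 𝔸) :
    P a a < 1 := by
  obtain ⟨b, hba, hab⟩ := hA.exists_ne_adj a
  have hPb : 0 < P a b :=
    (hPnn a b).lt_of_ne fun h => by simp [(hcompat a b).1 h.symm] at hab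
  have hsum : P a a + P a b ≤ ∑ j, P a j := by
    classical
    rw [← Finset.sum_pair hba.symm]
    exact Finset.sum_le_sum_of_subset_of_nonneg (Finset.subset_univ _)
      fun j _ _ => hPnn a j
  linarith [hrow a]

theorem Nat.find_ne_eq_of_eqOn {𝔸 : Type*} [DecidableEq 𝔸] {x y : ℕ → 𝔸} {a : 𝔸}
    (hx : ∃ j, x j ≠ a) (hy : ∃ j, y j ≠ a) (hxy : ∀ i ≤ Nat.find hx, y i = x i) :
    Nat.find hy = Nat.find hx :=
  (Nat.find_eq_iff hy).2
    ⟨hxy _ le_rfl ▸ Nat.find_spec hx, fun i hi => hxy i hi.le ▸ Nat.find_min hx hi⟩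

namespace Subshift

variable {𝔸 : Type*} {A : 𝔸 → 𝔸 → Bool}

theorem cylinder_antitone (w : ℕ → 𝔸) : Antitone (cylinder A w) :=
  fun _ _ hmn _ hx i hi => hx i (lt_of_lt_of_le hi hmn)

theorem cylinder_congr {v w : ℕ → 𝔸} {n : ℕ} (h : ∀ i < n, v i = w i) :
    cylinder A v n = cylinder A w n := by
  ext x
  exact forall₂_congr fun i hi => by rw [h i hi]

theorem measurableSet_cylinder [MeasurableSpace 𝔸] [MeasurableSingletonClass 𝔸]
    (w : ℕ → 𝔸) (n : ℕ) : MeasurableSet (cylinder A w n) := by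
  have hcoord : ∀ i, Measurable fun x : Subtype (Adm A) => x.1 i :=
    fun i => (measurable_pi_apply i).comp measurable_subtype_coe
  simp only [_root_.cylinder, Set.ofPred_forall]
  exact .iInter fun i => .iInter fun _ => hcoord i (measurableSet_singleton (w i))

variable [MeasurableSpace 𝔸] {μ : Measure (Subtype (Adm A))} {ε : ℝ}

theorem mem_ball_iff {x y : Subtype (Adm A)} :
    y ∈ ball A μ ε x ↔ ∃ m, y ∈ cylinder A x.1 m ∧ μ (cylinder A x.1 m) < ENNReal.ofReal ε := by
  simp only [ball, d2, Set.mem_ofPred_eq, iInf_lt_iff, _root_.cylinder, exists_prop]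
  exact exists_congr fun m => and_congr_left' (forall₂_congr fun i _ => eq_comm)

theorem measurableSet_ball [MeasurableSingletonClass 𝔸] (x : Subtype (Adm A)) :
    MeasurableSet (ball A μ ε x) := by
  have : ball A μ ε x =
      ⋃ m, ⋃ (_ : μ (cylinder A x.1 m) < ENNReal.ofReal ε), cylinder A x.1 m := by
    ext y
    simp only [mem_ball_iff, Set.mem_iUnion, exists_prop, and_comm]
  rw [this]
  exact .iUnion fun m => .iUnion fun _ => measurableSet_cylinder _ _

theorem ball_subset_cylinder_succ {x : Subtype (Adm A)} {k : ℕ}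
    (hk : ENNReal.ofReal ε ≤ μ (cylinder A x.1 k)) : ball A μ ε x ⊆ cylinder A x.1 (k + 1) := by
  intro y hy
  obtain ⟨m, hym, hm⟩ := mem_ball_iff.1 hy
  have hkm : k < m := by
    by_contra! hmk
    exact (hk.trans (measure_mono (cylinder_antitone x.1 hmk))).not_gt hm
  exact cylinder_antitone x.1 hkm hym

theorem ae_exists_ne_of_tendsto_measure_cylinder {a : 𝔸}
    (h : Tendsto (fun n => μ (cylinder A (fun _ => a) n)) atTop (𝓝 0)) :
    ∀ᵐ x ∂μ, ∃ j, x.1 j ≠ a := by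
  simp only [ae_iff, not_exists, not_not]
  exact le_antisymm (ge_of_tendsto' h fun n => measure_mono fun x hx i _ => hx i) bot_le

theorem exists_find_eq_of_mem_ball [DecidableEq 𝔸] {a : 𝔸} {x : Subtype (Adm A)}
    (hx : ∃ j, x.1 j ≠ a) (hε : ENNReal.ofReal ε ≤ μ (cylinder A (fun _ => a) (Nat.find hx)))
    {y : Subtype (Adm A)} (hy : y ∈ ball A μ ε x) :
    ∃ hy : ∃ j, y.1 j ≠ a, Nat.find hy = Nat.find hx := by
  have hcyl : cylinder A x.1 (Nat.find hx) = cylinder A (fun _ => a) (Nat.find hx) :=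
    cylinder_congr fun i hi => not_not.1 (Nat.find_min hx hi)
  have hyx : ∀ i ≤ Nat.find hx, y.1 i = x.1 i :=
    fun i hi => ball_subset_cylinder_succ (hcyl ▸ hε) hy i (Nat.lt_succ_of_le hi)
  exact ⟨⟨_, hyx _ le_rfl ▸ Nat.find_spec hx⟩, Nat.find_ne_eq_of_eqOn _ _ hyx⟩

theorem ofReal_osc_truncation_le_indicator [DecidableEq 𝔸] [MeasurableSingletonClass 𝔸]
    {a : 𝔸} {χ : Subtype (Adm A) → ℝ} (f : ℕ → ℝ)
    (hχ : ∀ x (hx : ∃ j, x.1 j ≠ a), χ x = f (Nat.find hx)) (hχ0 : ∀ᵐ x ∂μ, 0 ≤ χ x)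
    {ℓ : ℝ} (hℓ : 0 ≤ ℓ) {n : ℕ} (hε : ENNReal.ofReal ε ≤ μ (cylinder A (fun _ => a) (n - 1)))
    (x : Subtype (Adm A)) :
    ENNReal.ofReal (osc μ ({y | χ y ≤ ℓ}.indicator χ) (ball A μ ε x)) ≤
      (cylinder A (fun _ => a) n).indicator (fun _ => ENNReal.ofReal ℓ) x := by
  by_cases hxn : x ∈ cylinder A (fun _ => a) n
  · rw [Set.indicator_of_mem hxn]
    refine ENNReal.ofReal_le_ofReal ((osc_le_of_ae_mem_Icc hℓ ?_).trans_eq (sub_zero ℓ))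
    refine ae_restrict_of_ae (hχ0.mono fun y hy => ?_)
    by_cases hyℓ : χ y ≤ ℓ <;> simp [Set.indicator, hyℓ, hy, hℓ]
  · rw [Set.indicator_of_notMem hxn, nonpos_iff_eq_zero, ENNReal.ofReal_eq_zero]
    obtain ⟨i, hin, hi⟩ : ∃ i < n, x.1 i ≠ a := by simpa [_root_.cylinder] using hxn
    have hx : ∃ j, x.1 j ≠ a := ⟨i, hi⟩
    have hεx : ENNReal.ofReal ε ≤ μ (cylinder A (fun _ => a) (Nat.find hx)) :=
      hε.trans (measure_mono (cylinder_antitone _ (by have := Nat.find_min' hx hi; omega)))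
    refine (osc_le_of_ae_mem_Icc (le_refl ({y | χ y ≤ ℓ}.indicator χ x)) ?_).trans_eq
      (sub_self _)
    filter_upwards [ae_restrict_mem (measurableSet_ball x)] with y hy
    obtain ⟨hy', hfind⟩ := exists_find_eq_of_mem_ball hx hεx hy
    have hχy : χ y = χ x := by rw [hχ y hy', hχ x hx, hfind]
    simp only [Set.Icc_self, Set.mem_singleton_iff, Set.indicator, Set.mem_ofPred_eq, hχy]

end Subshift

theorem stmt17_general {𝔸 : Type*} [Fintype 𝔸] [DecidableEq 𝔸] [MeasurableSpace 𝔸]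
    [MeasurableSingletonClass 𝔸]
    (A : 𝔸 → 𝔸 → Bool) (hcard : 2 ≤ Fintype.card 𝔸) (hprim : Primitive A)
    (P : 𝔸 → 𝔸 → ℝ) (pi0 : 𝔸 → ℝ)
    (hPnn : ∀ i j, 0 ≤ P i j) (hcompat : ∀ i j, P i j = 0 ↔ A i j = false)
    (hrow : ∀ i, ∑ j, P i j = 1)
    (μ : Measure {x : ℕ → 𝔸 // Adm A x}) [IsProbabilityMeasure μ]
    (hμ : ∀ (n : ℕ) (w : ℕ → 𝔸), μ (cylinder A w (n + 1)) =
      ENNReal.ofReal (pi0 (w 0) * ∏ i ∈ Finset.range n, P (w i) (w (i + 1))))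
    (a1 : 𝔸) (q η : ℝ) (hq : q = P a1 a1) (hq0 : 0 < q) (hη : 1 / q < η)
    (χ : {x : ℕ → 𝔸 // Adm A x} → ℝ)
    (hχ : ∀ (x : {x : ℕ → 𝔸 // Adm A x}) (h : ∃ j, x.1 j ≠ a1),
      χ x = η ^ Nat.find h) :
    ∀ (n : ℕ), 1 ≤ n → ∀ ε ℓ : ℝ, 0 < ε → ε < 1 → 0 < ℓ →
      (μ (cylinder A (fun _ => a1) n)).toReal ≤ ε →
      ε < (μ (cylinder A (fun _ => a1) (n - 1))).toReal →
      (∫⁻ x, ENNReal.ofReal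
          (osc μ (Set.indicator {y | χ y ≤ ℓ} χ) (ball A μ ε x)) ∂μ)
        / ENNReal.ofReal ε ≤ ENNReal.ofReal ℓ := by
  intro n _ ε ℓ hε _ hℓ hlo hhi
  have : Nontrivial 𝔸 := Fintype.one_lt_card_iff_nontrivial.1 hcard
  have hq1 : q < 1 := hq ▸ hprim.self_transition_lt_one hPnn hcompat hrow a1
  have hexit : ∀ᵐ x ∂μ, ∃ j, x.1 j ≠ a1 := by
    refine Subshift.ae_exists_ne_of_tendsto_measure_cylinder ((tendsto_add_atTop_iff_nat 1).1 ?_)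
    simp only [hμ, ← hq, Finset.prod_const, Finset.card_range]
    simpa using ENNReal.tendsto_ofReal
      ((tendsto_pow_atTop_nhds_zero_of_lt_one hq0.le hq1).const_mul (pi0 a1))
  have hχ0 : ∀ᵐ x ∂μ, 0 ≤ χ x :=
    hexit.mono fun x hx => hχ x hx ▸ pow_nonneg ((one_div_pos.2 hq0).trans hη).le _
  have hεn : ENNReal.ofReal ε ≤ μ (cylinder A (fun _ => a1) (n - 1)) :=
    ((ENNReal.ofReal_lt_iff_lt_toReal hε.le (measure_ne_top μ _)).2 hhi).le
  have hεn' : μ (cylinder A (fun _ => a1) n) ≤ ENNReal.ofReal ε :=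
    (ENNReal.le_ofReal_iff_toReal_le (measure_ne_top μ _) hε.le).2 hlo
  calc (∫⁻ x, ENNReal.ofReal (osc μ ({y | χ y ≤ ℓ}.indicator χ) (ball A μ ε x)) ∂μ)
        / ENNReal.ofReal ε
      ≤ ENNReal.ofReal ℓ * μ (cylinder A (fun _ => a1) n) / ENNReal.ofReal ε := by
        gcongr
        exact (lintegral_mono (Subshift.ofReal_osc_truncation_le_indicator (fun j => η ^ j)
          hχ hχ0 hℓ.le hεn)).trans (lintegral_indicator_const_le _ _)
    _ ≤ ENNReal.ofReal ℓ * ENNReal.ofReal ε / ENNReal.ofReal ε := by gcongr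
    _ = ENNReal.ofReal ℓ :=
        ENNReal.mul_div_cancel_right (ENNReal.ofReal_pos.2 hε).ne' ENNReal.ofReal_ne_top

/-- For the Markov measure and the observable `χ` of the St. Petersburg
example, for every `ε ∈ [μ([𝔞₁]_n), μ([𝔞₁]_{n−1}))` and every `ℓ > 0`,
`(1/ε)·∫ osc(χ·1_{χ≤ℓ}, B(ε,x)) dμ(x) ≤ ℓ`, with balls in the measure-metric `d₂`. -/
theorem stmt17 {𝔸 : Type*} [Fintype 𝔸] [DecidableEq 𝔸] [MeasurableSpace 𝔸]
    [MeasurableSingletonClass 𝔸]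
    (A : 𝔸 → 𝔸 → Bool) (hcard : 2 ≤ Fintype.card 𝔸) (hprim : Primitive A)
    (P : 𝔸 → 𝔸 → ℝ) (pi0 : 𝔸 → ℝ)
    (hPnn : ∀ i j, 0 ≤ P i j) (hcompat : ∀ i j, P i j = 0 ↔ A i j = false)
    (hrow : ∀ i, ∑ j, P i j = 1)
    (hπnn : ∀ i, 0 ≤ pi0 i) (hπsum : ∑ i, pi0 i = 1)
    (hstat : ∀ j, ∑ i, pi0 i * P i j = pi0 j)
    (μ : Measure {x : ℕ → 𝔸 // Adm A x}) [IsProbabilityMeasure μ]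
    (hμ : ∀ (n : ℕ) (w : ℕ → 𝔸), μ (cylinder A w (n + 1)) =
      ENNReal.ofReal (pi0 (w 0) * ∏ i ∈ Finset.range n, P (w i) (w (i + 1))))
    (a1 : 𝔸) (q η : ℝ) (hq : q = P a1 a1) (hq0 : 0 < q) (hη : 1 / q < η)
    (χ : {x : ℕ → 𝔸 // Adm A x} → ℝ)
    (hχ : ∀ (x : {x : ℕ → 𝔸 // Adm A x}) (h : ∃ j, x.1 j ≠ a1),
      χ x = η ^ Nat.find h) :
    ∀ (n : ℕ), 1 ≤ n → ∀ ε ℓ : ℝ, 0 < ε → ε < 1 → 0 < ℓ →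
      (μ (cylinder A (fun _ => a1) n)).toReal ≤ ε →
      ε < (μ (cylinder A (fun _ => a1) (n - 1))).toReal →
      (∫⁻ x, ENNReal.ofReal
          (osc μ (Set.indicator {y | χ y ≤ ℓ} χ) (ball A μ ε x)) ∂μ)
        / ENNReal.ofReal ε ≤ ENNReal.ofReal ℓ :=
  stmt17_general A hcard hprim P pi0 hPnn hcompat hrow μ hμ a1 q η hq hq0 hη χ hχ
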